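/- arXiv:2108.03951 — 3 statements merged into one kernel-verified Lean document; each statement's English description precedes it below -/
import Mathlib

section
/- Let Ωⱼ ⊆ ℂⁿ be open connected sets and Ω∞ ⊆ ℂⁿ an open connected set such that every compact subset of Ω∞ is contained in Ωⱼ for all sufficiently large j. Suppose that the infinitesimal Kobayashi metrics F_{Ωⱼ} converge to F_{Ω∞} uniformly on compact subsets of Ω∞ × ℂⁿ, and that F_{Ω∞} is continuous on Ω∞ × ℂⁿ. Then for all x, y ∈ Ω∞, limsup_{j→∞} d_{Ωⱼ}(x, y) ≤ d_{Ω∞}(x, y), where d denotes the integrated Kobayashi distance. -/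
open Metric Set Filter

noncomputable section

/-- The infinitesimal Kobayashi metric of an open set `Ω ⊆ ℂⁿ`:
`F_Ω(p, v) = inf { λ > 0 : ∃ f : Δ → Ω holomorphic, f(0) = p, λ • f'(0) = v }`. -/
def kobMetric (n : ℕ) (Ω : Set (EuclideanSpace ℂ (Fin n)))
    (p v : EuclideanSpace ℂ (Fin n)) : ℝ :=
  sInf {l : ℝ | 0 < l ∧ ∃ f : ℂ → EuclideanSpace ℂ (Fin n),
    DifferentiableOn ℂ f (ball (0 : ℂ) 1) ∧ MapsTo f (ball (0 : ℂ) 1) Ω ∧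
    f 0 = p ∧ l • deriv f 0 = v}

/-- A piecewise `C¹` path parametrized on `[0, 1]`. -/
def PiecewiseC1 {n : ℕ} (γ : ℝ → EuclideanSpace ℂ (Fin n)) : Prop :=
  ∃ (k : ℕ) (t : ℕ → ℝ), 0 < k ∧ t 0 = 0 ∧ t k = 1 ∧
    (∀ i < k, t i < t (i + 1)) ∧
    ∀ i < k, ContDiffOn ℝ 1 γ (Set.Icc (t i) (t (i + 1)))

/-- The integrated Kobayashi (pseudo)distance: the infimum of Kobayashi lengths of
piecewise `C¹` paths in `Ω` joining `x` to `y`. -/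
def kobDist (n : ℕ) (Ω : Set (EuclideanSpace ℂ (Fin n)))
    (x y : EuclideanSpace ℂ (Fin n)) : ℝ :=
  sInf {r : ℝ | ∃ γ : ℝ → EuclideanSpace ℂ (Fin n), PiecewiseC1 γ ∧
    (∀ t ∈ Set.Icc (0 : ℝ) 1, γ t ∈ Ω) ∧ γ 0 = x ∧ γ 1 = y ∧
    r = ∫ t in (0 : ℝ)..1, kobMetric n Ω (γ t) (deriv γ t)}

/-!
A piecewise `C¹` path `γ` from `x` to `y` in `Ω∞` exists, since an open connected set is chained
by segments inside balls. Its image is compact, so it lies in `Ωⱼ` for large `j`, and away from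
the finitely many break points `(γ, γ')` stays in a compact set `K ⊆ Ω∞ × ℂⁿ`. Uniform convergence
on `K` then gives, for large `j`,
`d_{Ωⱼ}(x, y) ≤ ∫ F_{Ωⱼ}(γ, γ') ≤ ∫ F_{Ω∞}(γ, γ') + ε`,
where continuity of `F_{Ω∞}` makes the right-hand integrand integrable. The existence of one
admissible path matters: otherwise `d_{Ω∞}(x, y)` would be the junk value `sInf ∅ = 0`.
-/

open MeasureTheory

structure IsSubdivision (t : ℕ → ℝ) (k : ℕ) (a b : ℝ) : Prop where
  pos : 0 < k
  zero : t 0 = a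
  last : t k = b
  lt_succ : ∀ i < k, t i < t (i + 1)

namespace IsSubdivision

variable {t : ℕ → ℝ} {k : ℕ} {a b : ℝ}

lemma monotoneOn (ht : IsSubdivision t k a b) : MonotoneOn t (Iic k) :=
  monotoneOn_of_le_succ ordConnected_Iic fun i _ _ hi => by
    rw [Order.succ_eq_add_one] at hi ⊢
    exact (ht.lt_succ i (Nat.lt_of_succ_le hi)).le

lemma Icc_subset (ht : IsSubdivision t k a b) {i : ℕ} (hi : i < k) :
    Icc (t i) (t (i + 1)) ⊆ Icc a b := by
  rw [← ht.zero, ← ht.last]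
  exact Icc_subset_Icc (ht.monotoneOn (Nat.zero_le k) hi.le (Nat.zero_le i))
    (ht.monotoneOn (mem_Iic.2 hi) (mem_Iic.2 le_rfl) hi)

lemma exists_mem_Icc (ht : IsSubdivision t k a b) {s : ℝ} (hs : s ∈ Icc a b) :
    ∃ i < k, s ∈ Icc (t i) (t (i + 1)) := by
  classical
  set i := Nat.findGreatest (fun i => t i ≤ s) (k - 1)
  have hik : i < k := (Nat.findGreatest_le _).trans_lt (by have := ht.pos; omega)
  refine ⟨i, hik, Nat.findGreatest_spec (P := fun i => t i ≤ s) (Nat.zero_le _)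
    (ht.zero ▸ hs.1), ?_⟩
  rcases (Nat.succ_le_of_lt hik).eq_or_lt with h | h
  · rw [Nat.succ_eq_add_one] at h
    rw [h, ht.last]
    exact hs.2
  · exact (not_le.1 (Nat.findGreatest_is_greatest (P := fun i => t i ≤ s) (n := k - 1)
      (Nat.lt_succ_self i) (by omega))).le

lemma ae_mem_Ioo (ht : IsSubdivision t k a b) :
    ∀ᵐ s ∂volume.restrict (Icc a b), ∃ i < k, s ∈ Ioo (t i) (t (i + 1)) := by
  have hnull : ∀ᵐ s : ℝ, s ∉ t '' Iic k :=
    measure_eq_zero_iff_ae_notMem.1 (((finite_Iic k).image t).measure_zero _)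
  filter_upwards [ae_restrict_mem measurableSet_Icc, ae_restrict_of_ae hnull] with s hs hst
  obtain ⟨i, hi, hsi⟩ := ht.exists_mem_Icc hs
  refine ⟨i, hi, hsi.1.lt_of_ne ?_, hsi.2.lt_of_ne ?_⟩
  · rintro rfl
    exact hst ⟨i, mem_Iic.2 hi.le, rfl⟩
  · rintro rfl
    exact hst ⟨i + 1, mem_Iic.2 hi, rfl⟩

lemma append {t' : ℕ → ℝ} {k' : ℕ} {c : ℝ} (ht : IsSubdivision t k a b)
    (ht' : IsSubdivision t' k' b c) :
    ∃ T : ℕ → ℝ, IsSubdivision T (k + k') a c ∧ ∀ i < k + k',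
      (∃ j < k, T i = t j ∧ T (i + 1) = t (j + 1)) ∨
        (∃ j < k', T i = t' j ∧ T (i + 1) = t' (j + 1)) := by
  set T : ℕ → ℝ := fun i => if i ≤ k then t i else t' (i - k)
  have hT : ∀ i, k ≤ i → T i = t' (i - k) := by
    intro i hi
    rcases hi.eq_or_lt with rfl | hi
    · simp [T, ht.last, ht'.zero]
    · simp [T, not_le.2 hi]
  have hpiece : ∀ i < k + k', (∃ j < k, T i = t j ∧ T (i + 1) = t (j + 1)) ∨
      (∃ j < k', T i = t' j ∧ T (i + 1) = t' (j + 1)) := by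
    intro i hi
    rcases lt_or_ge i k with hik | hik
    · exact Or.inl ⟨i, hik, if_pos hik.le, if_pos hik⟩
    · refine Or.inr ⟨i - k, by omega, hT i hik, ?_⟩
      rw [hT (i + 1) (by omega), Nat.sub_add_comm hik]
  refine ⟨T, ⟨by have := ht.pos; omega, by simp [T, ht.zero], ?_, fun i hi => ?_⟩, hpiece⟩
  · rw [hT _ (by omega), Nat.add_sub_cancel_left, ht'.last]
  · rcases hpiece i hi with ⟨j, hj, h, h'⟩ | ⟨j, hj, h, h'⟩ <;> rw [h, h']
    exacts [ht.lt_succ j hj, ht'.lt_succ j hj]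

end IsSubdivision

section PiecewiseC1On

variable {E : Type*} [NormedAddCommGroup E] [NormedSpace ℝ E] {γ δ : ℝ → E} {a b : ℝ}

def PiecewiseC1On (γ : ℝ → E) (a b : ℝ) : Prop :=
  ∃ (k : ℕ) (t : ℕ → ℝ), IsSubdivision t k a b ∧
    ∀ i < k, ContDiffOn ℝ 1 γ (Icc (t i) (t (i + 1)))

lemma piecewiseC1_iff {n : ℕ} {γ : ℝ → EuclideanSpace ℂ (Fin n)} :
    PiecewiseC1 γ ↔ PiecewiseC1On γ 0 1 :=
  ⟨fun ⟨k, t, hk, h0, h1, hlt, hγ⟩ => ⟨k, t, ⟨hk, h0, h1, hlt⟩, hγ⟩,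
    fun ⟨k, t, ⟨hk, h0, h1, hlt⟩, hγ⟩ => ⟨k, t, hk, h0, h1, hlt, hγ⟩⟩

lemma ContDiffOn.piecewiseC1On (hγ : ContDiffOn ℝ 1 γ (Icc a b)) (hab : a < b) :
    PiecewiseC1On γ a b :=
  ⟨1, fun i => if i = 0 then a else b, ⟨one_pos, by simp, by simp, by simpa⟩, by simpa⟩

lemma PiecewiseC1On.congr (hγ : PiecewiseC1On γ a b) (hδ : EqOn γ δ (Icc a b)) :
    PiecewiseC1On δ a b := by
  obtain ⟨k, t, ht, hγ⟩ := hγ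
  exact ⟨k, t, ht, fun i hi => (hγ i hi).congr fun s hs => (hδ (ht.Icc_subset hi hs)).symm⟩

lemma PiecewiseC1On.append {c : ℝ} (h₁ : PiecewiseC1On γ a b) (h₂ : PiecewiseC1On γ b c) :
    PiecewiseC1On γ a c := by
  obtain ⟨k₁, t₁, ht₁, hγ₁⟩ := h₁
  obtain ⟨k₂, t₂, ht₂, hγ₂⟩ := h₂
  obtain ⟨T, hT, hpiece⟩ := ht₁.append ht₂
  refine ⟨_, T, hT, fun i hi => ?_⟩
  rcases hpiece i hi with ⟨j, hj, h, h'⟩ | ⟨j, hj, h, h'⟩ <;> rw [h, h']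
  exacts [hγ₁ j hj, hγ₂ j hj]

lemma PiecewiseC1On.comp_mul_add {a' b' c d : ℝ} (hγ : PiecewiseC1On γ a' b') (hc : 0 < c)
    (ha : c * a + d = a') (hb : c * b + d = b') :
    PiecewiseC1On (fun s => γ (c * s + d)) a b := by
  obtain ⟨k, t, ht, hγ⟩ := hγ
  refine ⟨k, fun i => (t i - d) / c, ⟨ht.pos, ?_, ?_, fun i hi => ?_⟩, fun i hi => ?_⟩
  · rw [ht.zero, ← ha]
    field_simp
    ring
  · rw [ht.last, ← hb]
    field_simp
    ring
  · exact div_lt_div_of_pos_right (sub_lt_sub_right (ht.lt_succ i hi) d) hc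
  · refine (hγ i hi).comp ((contDiff_const.mul contDiff_id).add contDiff_const).contDiffOn ?_
    rintro s ⟨hs₁, hs₂⟩
    rw [div_le_iff₀ hc] at hs₁
    rw [le_div_iff₀ hc] at hs₂
    constructor <;> dsimp <;> linarith

lemma ContDiffOn.continuousOn_prodMk_derivWithin (hγ : ContDiffOn ℝ 1 γ (Icc a b)) (hab : a < b) :
    ContinuousOn (fun s => (γ s, derivWithin γ (Icc a b) s)) (Icc a b) :=
  hγ.continuousOn.prodMk (hγ.continuousOn_derivWithin (uniqueDiffOn_Icc hab) le_rfl)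

lemma PiecewiseC1On.isCompact_image (hγ : PiecewiseC1On γ a b) : IsCompact (γ '' Icc a b) := by
  obtain ⟨k, t, ht, hγ⟩ := hγ
  convert (finite_Iio k).isCompact_biUnion fun i hi =>
    isCompact_Icc.image_of_continuousOn (hγ i hi).continuousOn
  ext z
  simp only [mem_image, mem_iUnion, mem_Iio, exists_prop]
  constructor
  · rintro ⟨s, hs, rfl⟩
    obtain ⟨i, hi, hsi⟩ := ht.exists_mem_Icc hs
    exact ⟨i, hi, s, hsi, rfl⟩
  · rintro ⟨i, hi, s, hsi, rfl⟩
    exact ⟨s, ht.Icc_subset hi hsi, rfl⟩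

lemma PiecewiseC1On.exists_isCompact_ae_mem (hγ : PiecewiseC1On γ a b) :
    ∃ K ⊆ (γ '' Icc a b) ×ˢ (univ : Set E), IsCompact K ∧
      ∀ᵐ s ∂volume.restrict (Icc a b), (γ s, deriv γ s) ∈ K := by
  obtain ⟨k, t, ht, hγ⟩ := hγ
  refine ⟨⋃ i ∈ Iio k,
    (fun s => (γ s, derivWithin γ (Icc (t i) (t (i + 1))) s)) '' Icc (t i) (t (i + 1)),
    ?_, ?_, ?_⟩
  · simp only [iUnion_subset_iff]
    rintro i hi _ ⟨s, hs, rfl⟩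
    exact ⟨mem_image_of_mem γ (ht.Icc_subset hi hs), mem_univ _⟩
  · exact (finite_Iio k).isCompact_biUnion fun i hi => isCompact_Icc.image_of_continuousOn
      ((hγ i hi).continuousOn_prodMk_derivWithin (ht.lt_succ i hi))
  · filter_upwards [ht.ae_mem_Ioo] with s ⟨i, hi, hs⟩
    refine mem_biUnion hi ⟨s, Ioo_subset_Icc_self hs, ?_⟩
    simp only [derivWithin_of_mem_nhds (Icc_mem_nhds hs.1 hs.2)]

lemma PiecewiseC1On.intervalIntegrable_comp {S : Set E} {F : E × E → ℝ}
    (hγ : PiecewiseC1On γ a b) (hF : ContinuousOn F (S ×ˢ univ)) (hγS : MapsTo γ (Icc a b) S) :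
    IntervalIntegrable (fun s => F (γ s, deriv γ s)) volume a b := by
  obtain ⟨k, t, ht, hγ⟩ := hγ
  rw [← ht.zero, ← ht.last]
  refine IntervalIntegrable.trans_iterate fun i hi => ?_
  have hlt := ht.lt_succ i hi
  refine (ContinuousOn.intervalIntegrable
    (u := fun s => F (γ s, derivWithin γ (Icc (t i) (t (i + 1))) s)) ?_).congr_uIoo ?_
  · rw [uIcc_of_le hlt.le]
    exact hF.comp ((hγ i hi).continuousOn_prodMk_derivWithin hlt)
      fun s hs => ⟨hγS (ht.Icc_subset hi hs), mem_univ _⟩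
  · rw [uIoo_of_le hlt.le]
    intro s hs
    simp only [derivWithin_of_mem_nhds (Icc_mem_nhds hs.1 hs.2)]

end PiecewiseC1On

lemma intervalIntegral_le_add_of_ae_le {f g : ℝ → ℝ} {a b ε : ℝ} (hab : a ≤ b)
    (hf : IntervalIntegrable f volume a b) (hf0 : 0 ≤ f) (hε : 0 ≤ ε)
    (hgf : ∀ᵐ s ∂volume.restrict (Icc a b), g s ≤ f s + ε) :
    ∫ s in a..b, g s ≤ (∫ s in a..b, f s) + (b - a) * ε := by
  by_cases hg : IntervalIntegrable g volume a b
  · calc ∫ s in a..b, g s ≤ ∫ s in a..b, (f s + ε) :=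
          intervalIntegral.integral_mono_ae_restrict hab hg (hf.add intervalIntegrable_const) hgf
      _ = (∫ s in a..b, f s) + (b - a) * ε := by
          rw [intervalIntegral.integral_add hf intervalIntegrable_const,
            intervalIntegral.integral_const, smul_eq_mul]
  · rw [intervalIntegral.integral_undef hg]
    exact add_nonneg (intervalIntegral.integral_nonneg hab fun s _ => hf0 s)
      (mul_nonneg (sub_nonneg.2 hab) hε)

section PiecewiseC1JoinedIn

variable {E : Type*} [NormedAddCommGroup E] [NormedSpace ℝ E] {Ω : Set E} {x y z : E}

def PiecewiseC1JoinedIn (Ω : Set E) (x y : E) : Prop :=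
  ∃ γ : ℝ → E, PiecewiseC1On γ 0 1 ∧ MapsTo γ (Icc 0 1) Ω ∧ γ 0 = x ∧ γ 1 = y

lemma PiecewiseC1JoinedIn.of_segment_subset (h : segment ℝ x y ⊆ Ω) :
    PiecewiseC1JoinedIn Ω x y := by
  refine ⟨fun s => x + s • (y - x),
    (contDiff_const.add (contDiff_id.smul contDiff_const)).contDiffOn.piecewiseC1On one_pos,
    fun s hs => h ?_, by simp, by simp⟩
  rw [segment_eq_image']
  exact mem_image_of_mem _ hs

lemma PiecewiseC1JoinedIn.trans (h₁ : PiecewiseC1JoinedIn Ω x y)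
    (h₂ : PiecewiseC1JoinedIn Ω y z) : PiecewiseC1JoinedIn Ω x z := by
  obtain ⟨γ₁, hγ₁, hγ₁Ω, rfl, rfl⟩ := h₁
  obtain ⟨γ₂, hγ₂, hγ₂Ω, hγ₂0, rfl⟩ := h₂
  set γ : ℝ → E := fun s => if s ≤ 1 / 2 then γ₁ (2 * s) else γ₂ (2 * s - 1)
  -- the halves are written in the form `c * s + d` that `comp_mul_add` produces
  have h₁eq : EqOn (fun s => γ₁ (2 * s + 0)) γ (Icc 0 (1 / 2)) := fun s hs => by
    simp only [γ, if_pos hs.2, add_zero]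
  have h₂eq : EqOn (fun s => γ₂ (2 * s + -1)) γ (Icc (1 / 2) 1) := by
    rintro s ⟨hs, -⟩
    rcases hs.eq_or_lt with rfl | hs
    · norm_num [γ, hγ₂0]
    · simp only [γ, if_neg (not_le.2 hs), sub_eq_add_neg]
  refine ⟨γ, ((hγ₁.comp_mul_add two_pos (by norm_num) (by norm_num)).congr h₁eq).append
    ((hγ₂.comp_mul_add two_pos (by norm_num) (by norm_num)).congr h₂eq),
    fun s hs => ?_, by simp [γ], by norm_num [γ]⟩
  rcases le_total s (1 / 2) with hs' | hs'
  · rw [← h₁eq ⟨hs.1, hs'⟩]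
    exact hγ₁Ω ⟨by linarith [hs.1], by linarith⟩
  · rw [← h₂eq ⟨hs', hs.2⟩]
    exact hγ₂Ω ⟨by linarith, by linarith [hs.2]⟩

lemma IsOpen.piecewiseC1JoinedIn (hΩ : IsOpen Ω) (hΩc : IsPreconnected Ω) (hx : x ∈ Ω)
    (hy : y ∈ Ω) : PiecewiseC1JoinedIn Ω x y := by
  refine hΩc.induction₂' _ (fun z hz => ?_) (fun _ _ _ _ _ _ => PiecewiseC1JoinedIn.trans) hx hy
  obtain ⟨r, hr, hrΩ⟩ := Metric.isOpen_iff.1 hΩ z hz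
  filter_upwards [mem_nhdsWithin_of_mem_nhds (ball_mem_nhds z hr)] with w hw
  have hz' : z ∈ ball z r := mem_ball_self hr
  exact ⟨.of_segment_subset (((convex_ball z r).segment_subset hz' hw).trans hrΩ),
    .of_segment_subset (((convex_ball z r).segment_subset hw hz').trans hrΩ)⟩

end PiecewiseC1JoinedIn

section Kobayashi

variable {n : ℕ}

lemma kobMetric_nonneg (Ω : Set (EuclideanSpace ℂ (Fin n))) (p v : EuclideanSpace ℂ (Fin n)) :
    0 ≤ kobMetric n Ω p v :=
  Real.sInf_nonneg fun _ hl => hl.1.le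

lemma integral_kobMetric_nonneg (Ω : Set (EuclideanSpace ℂ (Fin n)))
    (γ : ℝ → EuclideanSpace ℂ (Fin n)) : 0 ≤ ∫ t in (0 : ℝ)..1, kobMetric n Ω (γ t) (deriv γ t) :=
  intervalIntegral.integral_nonneg zero_le_one fun _ _ => kobMetric_nonneg Ω _ _

lemma kobDist_nonneg (Ω : Set (EuclideanSpace ℂ (Fin n))) (x y : EuclideanSpace ℂ (Fin n)) :
    0 ≤ kobDist n Ω x y :=
  Real.sInf_nonneg fun _ ⟨γ, _, _, _, _, hr⟩ => hr ▸ integral_kobMetric_nonneg Ω γ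

lemma kobDist_le_integral {Ω : Set (EuclideanSpace ℂ (Fin n))} {γ : ℝ → EuclideanSpace ℂ (Fin n)}
    (hγ : PiecewiseC1 γ) (hγΩ : MapsTo γ (Icc 0 1) Ω) :
    kobDist n Ω (γ 0) (γ 1) ≤ ∫ t in (0 : ℝ)..1, kobMetric n Ω (γ t) (deriv γ t) :=
  csInf_le ⟨0, fun _ ⟨δ, _, _, _, _, hr⟩ => hr ▸ integral_kobMetric_nonneg Ω δ⟩
    ⟨γ, hγ, hγΩ, rfl, rfl, rfl⟩

lemma limsup_kobDist_le_integral {Ωs : ℕ → Set (EuclideanSpace ℂ (Fin n))}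
    {Ω : Set (EuclideanSpace ℂ (Fin n))}
    (hcpt : ∀ K ⊆ Ω, IsCompact K → ∃ j0, ∀ j ≥ j0, K ⊆ Ωs j)
    (hFconv : ∀ K : Set (EuclideanSpace ℂ (Fin n) × EuclideanSpace ℂ (Fin n)),
      IsCompact K → K ⊆ Ω ×ˢ (univ : Set (EuclideanSpace ℂ (Fin n))) →
      TendstoUniformlyOn (fun j pv => kobMetric n (Ωs j) pv.1 pv.2)
        (fun pv => kobMetric n Ω pv.1 pv.2) atTop K)
    (hFcont : ContinuousOn
      (fun pv : EuclideanSpace ℂ (Fin n) × EuclideanSpace ℂ (Fin n) => kobMetric n Ω pv.1 pv.2)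
      (Ω ×ˢ (univ : Set (EuclideanSpace ℂ (Fin n)))))
    {γ : ℝ → EuclideanSpace ℂ (Fin n)} (hγ : PiecewiseC1 γ) (hγΩ : MapsTo γ (Icc 0 1) Ω) :
    limsup (fun j => kobDist n (Ωs j) (γ 0) (γ 1)) atTop ≤
      ∫ t in (0 : ℝ)..1, kobMetric n Ω (γ t) (deriv γ t) := by
  have hγ' := piecewiseC1_iff.1 hγ
  obtain ⟨K, hKγ, hK, hγK⟩ := hγ'.exists_isCompact_ae_mem
  have hKΩ : K ⊆ Ω ×ˢ univ := hKγ.trans (prod_mono (image_subset_iff.2 hγΩ) subset_rfl)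
  obtain ⟨j₀, hj₀⟩ := hcpt _ (image_subset_iff.2 hγΩ) hγ'.isCompact_image
  refine le_of_forall_pos_le_add fun ε hε => limsup_le_of_le
    (isCoboundedUnder_le_of_le atTop fun j => kobDist_nonneg _ _ _) ?_
  filter_upwards [Metric.tendstoUniformlyOn_iff.1 (hFconv K hK hKΩ) ε hε,
    eventually_ge_atTop j₀] with j hj hjj₀
  have hFj : ∀ᵐ s ∂volume.restrict (Icc 0 1),
      kobMetric n (Ωs j) (γ s) (deriv γ s) ≤ kobMetric n Ω (γ s) (deriv γ s) + ε := by
    filter_upwards [hγK] with s hs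
    have := hj _ hs
    rw [Real.dist_eq, abs_lt] at this
    linarith
  calc kobDist n (Ωs j) (γ 0) (γ 1)
      ≤ ∫ t in (0 : ℝ)..1, kobMetric n (Ωs j) (γ t) (deriv γ t) :=
        kobDist_le_integral hγ fun s hs => hj₀ j hjj₀ (mem_image_of_mem γ hs)
    _ ≤ (∫ t in (0 : ℝ)..1, kobMetric n Ω (γ t) (deriv γ t)) + (1 - 0) * ε :=
        intervalIntegral_le_add_of_ae_le zero_le_one (hγ'.intervalIntegrable_comp hFcont hγΩ)
          (fun _ => kobMetric_nonneg Ω _ _) hε.le hFj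
    _ = (∫ t in (0 : ℝ)..1, kobMetric n Ω (γ t) (deriv γ t)) + ε := by ring

end Kobayashi

theorem stmt_14_general (n : ℕ)
    (Ωs : ℕ → Set (EuclideanSpace ℂ (Fin n)))
    (Ωinf : Set (EuclideanSpace ℂ (Fin n)))
    (hinfo : IsOpen Ωinf) (hinfc : IsConnected Ωinf)
    (hcpt : ∀ K ⊆ Ωinf, IsCompact K → ∃ j0, ∀ j ≥ j0, K ⊆ Ωs j)
    (hFconv : ∀ K : Set (EuclideanSpace ℂ (Fin n) × EuclideanSpace ℂ (Fin n)),
      IsCompact K → K ⊆ Ωinf ×ˢ (univ : Set (EuclideanSpace ℂ (Fin n))) →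
      TendstoUniformlyOn (fun j pv => kobMetric n (Ωs j) pv.1 pv.2)
        (fun pv => kobMetric n Ωinf pv.1 pv.2) atTop K)
    (hFcont : ContinuousOn
      (fun pv : EuclideanSpace ℂ (Fin n) × EuclideanSpace ℂ (Fin n) =>
        kobMetric n Ωinf pv.1 pv.2)
      (Ωinf ×ˢ (univ : Set (EuclideanSpace ℂ (Fin n)))))
    (x y : EuclideanSpace ℂ (Fin n)) (hx : x ∈ Ωinf) (hy : y ∈ Ωinf) :
    limsup (fun j => kobDist n (Ωs j) x y) atTop ≤ kobDist n Ωinf x y := by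
  obtain ⟨γ₀, hγ₀, hγ₀Ω, hγ₀0, hγ₀1⟩ := hinfo.piecewiseC1JoinedIn hinfc.isPreconnected hx hy
  refine le_csInf ⟨_, γ₀, piecewiseC1_iff.2 hγ₀, hγ₀Ω, hγ₀0, hγ₀1, rfl⟩ ?_
  rintro _ ⟨γ, hγ, hγΩ, rfl, rfl, rfl⟩
  exact limsup_kobDist_le_integral hcpt hFconv hFcont hγ hγΩ

theorem stmt_14 (n : ℕ)
    (Ωs : ℕ → Set (EuclideanSpace ℂ (Fin n)))
    (hopen : ∀ j, IsOpen (Ωs j)) (hconn : ∀ j, IsConnected (Ωs j))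
    (Ωinf : Set (EuclideanSpace ℂ (Fin n)))
    (hinfo : IsOpen Ωinf) (hinfc : IsConnected Ωinf)
    (hcpt : ∀ K ⊆ Ωinf, IsCompact K → ∃ j0, ∀ j ≥ j0, K ⊆ Ωs j)
    (hFconv : ∀ K : Set (EuclideanSpace ℂ (Fin n) × EuclideanSpace ℂ (Fin n)),
      IsCompact K → K ⊆ Ωinf ×ˢ (univ : Set (EuclideanSpace ℂ (Fin n))) →
      TendstoUniformlyOn (fun j pv => kobMetric n (Ωs j) pv.1 pv.2)
        (fun pv => kobMetric n Ωinf pv.1 pv.2) atTop K)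
    (hFcont : ContinuousOn
      (fun pv : EuclideanSpace ℂ (Fin n) × EuclideanSpace ℂ (Fin n) =>
        kobMetric n Ωinf pv.1 pv.2)
      (Ωinf ×ˢ (univ : Set (EuclideanSpace ℂ (Fin n)))))
    (x y : EuclideanSpace ℂ (Fin n)) (hx : x ∈ Ωinf) (hy : y ∈ Ωinf) :
    limsup (fun j => kobDist n (Ωs j) x y) atTop ≤ kobDist n Ωinf x y :=
  stmt_14_general n Ωs Ωinf hinfo hinfc hcpt hFconv hFcont x y hx hy
end
end

section
/- Let Mⱼ be an increasing sequence of open subsets of ℂⁿ whose union M = ∪ⱼ Mⱼ is connected, let Ω ⊆ ℂⁿ be a bounded open set, and let ψʲ : Mⱼ → Ω be biholomorphisms. Fix z⁰ ∈ M₁ and set pʲ = ψʲ(z⁰). Suppose that C^B_Ω(pʲ)/K^B_Ω(pʲ) → 1 as j → ∞ and that K^B_M(z⁰) > 0. Then C^B_M(z⁰) = K^B_M(z⁰). -/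
open Metric Set Filter

noncomputable section

/-- The ball-variant Carathéodory volume coefficient
`C^B_Y(p) = sup { |det Df(p)|² : f : Y → 𝔹ⁿ holomorphic, f(p) = 0 }`. -/
def caraBall (n : ℕ) (Y : Set (EuclideanSpace ℂ (Fin n)))
    (p : EuclideanSpace ℂ (Fin n)) : ℝ :=
  sSup {x : ℝ | ∃ f : EuclideanSpace ℂ (Fin n) → EuclideanSpace ℂ (Fin n),
    DifferentiableOn ℂ f Y ∧ MapsTo f Y (ball (0 : EuclideanSpace ℂ (Fin n)) 1) ∧
    f p = 0 ∧ x = ‖(fderiv ℂ f p).det‖ ^ 2}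

/-- The ball-variant Kobayashi–Eisenman volume coefficient
`K^B_Y(p) = inf { |det Dg(0)|⁻² : g : 𝔹ⁿ → Y holomorphic, g(0) = p, det Dg(0) ≠ 0 }`. -/
def kobBall (n : ℕ) (Y : Set (EuclideanSpace ℂ (Fin n)))
    (p : EuclideanSpace ℂ (Fin n)) : ℝ :=
  sInf {x : ℝ | ∃ g : EuclideanSpace ℂ (Fin n) → EuclideanSpace ℂ (Fin n),
    DifferentiableOn ℂ g (ball (0 : EuclideanSpace ℂ (Fin n)) 1) ∧
    MapsTo g (ball (0 : EuclideanSpace ℂ (Fin n)) 1) Y ∧ g 0 = p ∧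
    (fderiv ℂ g 0).det ≠ 0 ∧ x = (‖(fderiv ℂ g 0).det‖ ^ 2)⁻¹}


/-!
The inequality `C^B ≤ K^B` is the volume Schwarz lemma: for competitors `f : Y → 𝔹ⁿ` and
`g : 𝔹ⁿ → Y`, the iterates of `f ∘ g` are self-maps of the ball fixing `0`, so by the Cauchy
estimates their derivatives at `0` stay bounded; hence so do the powers `det D(f ∘ g)(0) ^ k`, and
`|det Df(p)| |det Dg(0)| ≤ 1`.

For the converse, composing with `ψʲ` and with its inverse rescales both coefficients by
`|det Dψʲ(z⁰)|²`; since the inverse maps into `Mⱼ ⊆ M`, this gives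
`C^B_{Mⱼ}(z⁰) ≥ (C^B_Ω(pʲ) / K^B_Ω(pʲ)) K^B_M(z⁰)`. Near-extremal Carathéodory maps of the `Mⱼ`
take values in the unit ball, so by the Cauchy estimates they are locally equi-Lipschitz and, along
an ultrafilter, converge locally uniformly together with their derivatives (Weierstrass). The
limit is holomorphic on `M` with values in the closed ball and `|det Df(z⁰)|² ≥ K^B_M(z⁰)`;
shrinking it by a factor `t < 1` makes it a competitor for `C^B_M(z⁰)`.
-/

open Topology

theorem ContinuousLinearMap.exists_norm_det_le (𝕜 E : Type*) [RCLike 𝕜] [NormedAddCommGroup E]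
    [NormedSpace 𝕜 E] [FiniteDimensional 𝕜 E] :
    ∃ C > 0, ∀ A : E →L[𝕜] E, ‖A.det‖ ≤ C * ‖A‖ ^ Module.finrank 𝕜 E := by
  have := FiniteDimensional.proper_rclike 𝕜 (E →L[𝕜] E)
  obtain ⟨C, hC⟩ := (isCompact_closedBall (0 : E →L[𝕜] E) 1).exists_bound_of_continuousOn
    ContinuousLinearMap.continuous_det.continuousOn
  refine ⟨max C 1, by positivity, fun A => ?_⟩
  obtain ⟨B, hB, hAB⟩ : ∃ B ∈ closedBall (0 : E →L[𝕜] E) 1, A = (‖A‖ : 𝕜) • B := by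
    rcases eq_or_ne A 0 with rfl | hA
    · exact ⟨0, by simp, by simp⟩
    · refine ⟨(‖A‖ : 𝕜)⁻¹ • A, ?_, ?_⟩
      · simp [hA]
      · simp [smul_smul, hA]
  have hdet : A.det = (‖A‖ : 𝕜) ^ Module.finrank 𝕜 E * B.det := by
    conv_lhs => rw [hAB]
    exact LinearMap.det_smul _ _
  rw [hdet, norm_mul, norm_pow, RCLike.norm_ofReal, abs_norm, mul_comm]
  gcongr
  exact (hC B hB).trans (le_max_left _ _)

theorem det_fderiv_comp {𝕜 E : Type*} [NontriviallyNormedField 𝕜] [NormedAddCommGroup E]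
    [NormedSpace 𝕜 E] {f g : E → E} {x : E} (hf : DifferentiableAt 𝕜 f (g x))
    (hg : DifferentiableAt 𝕜 g x) :
    (fderiv 𝕜 (f ∘ g) x).det = (fderiv 𝕜 f (g x)).det * (fderiv 𝕜 g x).det := by
  rw [fderiv_comp x hf hg]
  exact LinearMap.det_comp _ _

theorem det_fderiv_mul_det_fderiv_of_leftInvOn {𝕜 E : Type*} [NontriviallyNormedField 𝕜]
    [NormedAddCommGroup E] [NormedSpace 𝕜 E] {φ ψ : E → E} {s : Set E} {x : E}
    (hs : s ∈ 𝓝 x) (hφ : DifferentiableAt 𝕜 φ (ψ x)) (hψ : DifferentiableAt 𝕜 ψ x)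
    (hinv : LeftInvOn φ ψ s) : (fderiv 𝕜 φ (ψ x)).det * (fderiv 𝕜 ψ x).det = 1 := by
  have hid : φ ∘ ψ =ᶠ[𝓝 x] id := Filter.mem_of_superset hs fun y hy => hinv hy
  rw [← det_fderiv_comp hφ hψ, hid.fderiv_eq, fderiv_id]
  exact LinearMap.det_id

theorem tendstoUniformlyOn_of_lipschitzOnWith {ι X Y : Type*} [PseudoMetricSpace X]
    [PseudoMetricSpace Y] {l : Filter ι} {F : ι → X → Y} {f : X → Y} {K : Set X} {L : NNReal}
    (hK : IsCompact K) (hL : ∀ᶠ i in l, LipschitzOnWith L (F i) K)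
    (hf : ∀ x ∈ K, Tendsto (F · x) l (𝓝 (f x))) : TendstoUniformlyOn F f l K := by
  rcases l.eq_or_neBot with rfl | _
  · exact fun _ _ => eventually_bot
  have hfL : LipschitzOnWith L f K := LipschitzOnWith.of_dist_le_mul fun x hx y hy =>
    le_of_tendsto ((hf x hx).dist (hf y hy)) (hL.mono fun i hi => hi.dist_le_mul x hx y hy)
  rw [Metric.tendstoUniformlyOn_iff]
  intro ε hε
  set δ := ε / (3 * (L + 1)) with hδ
  have hδ0 : 0 < δ := by positivity
  have hLδ : L * δ < ε / 3 := by
    rw [hδ, mul_div_assoc', div_lt_div_iff₀ (by positivity) (by norm_num)]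
    nlinarith
  obtain ⟨t, htK, ht, hKt⟩ := finite_cover_balls_of_compact hK hδ0
  have hnet : ∀ᶠ i in l, ∀ y ∈ t, dist (f y) (F i y) < ε / 3 :=
    (ht.eventually_all).2 fun y hy =>
      ((hf y (htK hy)).eventually (ball_mem_nhds (f y) (div_pos hε three_pos))).mono fun i hi =>
        by rw [dist_comm]; exact hi
  filter_upwards [hnet, hL] with i hi hLi x hx
  obtain ⟨y, hyt, hxy⟩ := mem_iUnion₂.1 (hKt hx)
  have hxy' : L * dist x y < ε / 3 :=
    lt_of_le_of_lt (by gcongr; exact (mem_ball.1 hxy).le) hLδ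
  calc dist (f x) (F i x) ≤ dist (f x) (f y) + dist (f y) (F i y) + dist (F i y) (F i x) :=
        dist_triangle4 _ _ _ _
    _ ≤ L * dist x y + dist (f y) (F i y) + L * dist x y := by
        gcongr
        · exact hfL.dist_le_mul x hx y (htK hyt)
        · rw [dist_comm x]; exact hLi.dist_le_mul y (htK hyt) x hx
    _ < ε := by linarith [hi y hyt]

section Holomorphic

variable {E F : Type*} [NormedAddCommGroup E] [NormedSpace ℂ E]
  [NormedAddCommGroup F] [NormedSpace ℂ F]

theorem norm_det_fderiv_le_one_of_mapsTo_ball [FiniteDimensional ℂ E] {h : E → E} {c : E}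
    {r : ℝ} (hr : 0 < r) (hd : DifferentiableOn ℂ h (ball c r))
    (hm : MapsTo h (ball c r) (ball c r)) (hc : h c = c) : ‖(fderiv ℂ h c).det‖ ≤ 1 := by
  obtain ⟨C, hC0, hC⟩ := ContinuousLinearMap.exists_norm_det_le ℂ E
  have hpow : ∀ k : ℕ, ‖(fderiv ℂ h c).det‖ ^ k ≤ C := fun k => by
    have hck : h^[k] c = c := Function.iterate_fixed hc k
    have hderiv := (hd.differentiableAt (ball_mem_nhds c hr)).hasFDerivAt.iterate hc k
    have hnorm : ‖fderiv ℂ h^[k] c‖ ≤ 1 := by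
      refine Complex.norm_fderiv_le_one_of_mapsTo_ball (hd.iterate hm k) ?_ hr
      rw [hck]
      exact (hm.iterate k).mono_right ball_subset_closedBall
    calc ‖(fderiv ℂ h c).det‖ ^ k = ‖(fderiv ℂ h^[k] c).det‖ := by
          rw [hderiv.fderiv, ContinuousLinearMap.det, ContinuousLinearMap.det,
            ContinuousLinearMap.toLinearMap_pow, map_pow, norm_pow]
      _ ≤ C * ‖fderiv ℂ h^[k] c‖ ^ Module.finrank ℂ E := hC _
      _ ≤ C := mul_le_of_le_one_right (by positivity) (pow_le_one₀ (norm_nonneg _) hnorm)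
  by_contra! hlt
  obtain ⟨k, hk⟩ := pow_unbounded_of_one_lt C hlt
  exact (hpow k).not_gt hk

theorem UniformCauchySeqOn.fderiv_ball {ι : Type*} {l : Filter ι} {f : ι → E → F} {c : E}
    {r : ℝ} (hd : ∀ᶠ i in l, DifferentiableOn ℂ (f i) (ball c r))
    (hf : UniformCauchySeqOn f l (ball c r)) :
    UniformCauchySeqOn (fun i => fderiv ℂ (f i)) l (ball c (r / 2)) := by
  intro u hu
  obtain ⟨ε, hε, hεu⟩ := Metric.mem_uniformity_dist.1 hu
  rcases le_or_gt r 0 with hr | hr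
  · exact Eventually.of_forall fun _ x hx => absurd (pos_of_mem_ball hx) (by linarith)
  filter_upwards [hf _ (dist_mem_uniformity (show 0 < ε * r / 8 by positivity)), hd.prod_mk hd]
    with ⟨i, k⟩ hik ⟨hi, hk⟩ x hx
  have hsub : ball x (r / 2) ⊆ ball c r := ball_subset_ball' (by linarith [mem_ball.1 hx])
  have hdiff : DifferentiableOn ℂ (fun y => f i y - f k y) (ball x (r / 2)) :=
    (hi.sub hk).mono hsub
  have hmaps : MapsTo (fun y => f i y - f k y) (ball x (r / 2))
      (closedBall (f i x - f k x) (2 * (ε * r / 8))) := fun y hy => by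
    rw [mem_closedBall, dist_eq_norm]
    have hy' : ‖f i y - f k y‖ < ε * r / 8 := by
      simpa [dist_eq_norm] using hik y (hsub hy)
    have hx' : ‖f i x - f k x‖ < ε * r / 8 := by
      simpa [dist_eq_norm] using hik x (hsub (mem_ball_self (by linarith)))
    linarith [norm_sub_le (f i y - f k y) (f i x - f k x)]
  have hnorm := Complex.norm_fderiv_le_div_of_mapsTo_ball hdiff hmaps (by linarith)
  have hx' : x ∈ ball c r := hsub (mem_ball_self (by linarith))
  rw [fderiv_fun_sub ((hi.differentiableAt (isOpen_ball.mem_nhds hx')))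
    ((hk.differentiableAt (isOpen_ball.mem_nhds hx')))] at hnorm
  refine hεu (lt_of_le_of_lt ?_ (half_lt_self hε))
  rw [dist_eq_norm]
  refine hnorm.trans_eq ?_
  field_simp
  ring

theorem TendstoUniformlyOn.differentiableAt_and_tendsto_fderiv [CompleteSpace F] {ι : Type*}
    {l : Filter ι} [l.NeBot] {f : ι → E → F} {g : E → F} {c : E} {r : ℝ} (hr : 0 < r)
    (hd : ∀ᶠ i in l, DifferentiableOn ℂ (f i) (ball c r))
    (hf : TendstoUniformlyOn f g l (ball c r)) :
    DifferentiableAt ℂ g c ∧ Tendsto (fun i => fderiv ℂ (f i) c) l (𝓝 (fderiv ℂ g c)) := by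
  have hcauchy := hf.uniformCauchySeqOn.fderiv_ball hd
  have hlim : ∀ x ∈ ball c (r / 2), ∃ L, Tendsto (fun i => fderiv ℂ (f i) x) l (𝓝 L) :=
    fun x hx => (cauchy_map_iff_exists_tendsto (l := l)).1 (hcauchy.cauchy_map hx)
  choose! g' hg' using hlim
  have hc : c ∈ ball c (r / 2) := mem_ball_self (by positivity)
  have hderiv : HasFDerivAt g (g' c) c := by
    refine hasFDerivAt_of_tendstoUniformlyOnFilter (l := l) (f := f)
      (f' := fun i => fderiv ℂ (f i)) ?_ ?_ ?_
    · exact (tendstoUniformlyOn_iff_tendstoUniformlyOnFilter.1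
        (hcauchy.tendstoUniformlyOn_of_tendsto hg')).mono_right
        (le_principal_iff.2 (ball_mem_nhds c (by positivity)))
    · filter_upwards [hd.prod_mk (ball_mem_nhds c hr)] with ⟨i, y⟩ ⟨hi, hy⟩
      exact (hi.differentiableAt (isOpen_ball.mem_nhds hy)).hasFDerivAt
    · filter_upwards [ball_mem_nhds c hr] with y hy using hf.tendsto_at hy
  exact ⟨hderiv.differentiableAt, hderiv.fderiv ▸ hg' c hc⟩

theorem Ultrafilter.exists_tendsto_fderiv_of_eventually_mapsTo_closedBall [ProperSpace E]
    [ProperSpace F] {ι : Type*} (𝒰 : Ultrafilter ι) {f : ι → E → F} {U : Set E} {R : ℝ}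
    (hf : ∀ c ∈ U, ∃ r > 0, ∀ᶠ i in 𝒰,
      DifferentiableOn ℂ (f i) (ball c r) ∧ MapsTo (f i) (ball c r) (closedBall 0 R)) :
    ∃ g : E → F, ∀ x ∈ U, DifferentiableAt ℂ g x ∧ Tendsto (f · x) 𝒰 (𝓝 (g x)) ∧
      Tendsto (fun i => fderiv ℂ (f i) x) 𝒰 (𝓝 (fderiv ℂ g x)) := by
  refine ⟨fun x => limUnder 𝒰 (f · x), fun c hc => ?_⟩
  obtain ⟨r, hr, hfc⟩ := hf c hc
  have hpt : ∀ x ∈ ball c r, Tendsto (f · x) 𝒰 (𝓝 (limUnder 𝒰 (f · x))) := fun x hx => by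
    obtain ⟨y, -, hy⟩ := (isCompact_closedBall (0 : F) R).ultrafilter_le_nhds (𝒰.map (f · x))
      (le_principal_iff.2 (hfc.mono fun i hi => hi.2 hx))
    exact tendsto_nhds_limUnder ⟨y, hy⟩
  have hLip : ∀ᶠ i in 𝒰,
      LipschitzOnWith (4 * R / r).toNNReal (f i) (closedBall c (r / 2)) := by
    filter_upwards [hfc] with i ⟨hdi, hmi⟩
    have hsub : ∀ x ∈ closedBall c (r / 2), ball x (r / 2) ⊆ ball c r := fun x hx =>
      ball_subset_ball' (by linarith [mem_closedBall.1 hx])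
    refine (convex_closedBall c (r / 2)).lipschitzOnWith_of_nnnorm_fderiv_le (𝕜 := ℂ)
      (fun x hx => hdi.differentiableAt (isOpen_ball.mem_nhds
        (hsub x hx (mem_ball_self (half_pos hr))))) fun x hx => ?_
    have hmaps : MapsTo (f i) (ball x (r / 2)) (closedBall (f i x) (2 * R)) := by
      refine (hmi.mono_left (hsub x hx)).mono_right (closedBall_subset_closedBall' ?_)
      have := mem_closedBall_zero_iff.1 (hmi (hsub x hx (mem_ball_self (half_pos hr))))
      rw [dist_comm, dist_zero_right]
      linarith
    have hnorm := Complex.norm_fderiv_le_div_of_mapsTo_ball (hdi.mono (hsub x hx)) hmaps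
      (half_pos hr)
    rw [← NNReal.coe_le_coe, coe_nnnorm, Real.coe_toNNReal']
    exact le_max_of_le_left (hnorm.trans_eq (by field_simp; ring))
  have hunif : TendstoUniformlyOn f (fun x => limUnder 𝒰 (f · x)) 𝒰 (closedBall c (r / 2)) :=
    tendstoUniformlyOn_of_lipschitzOnWith (isCompact_closedBall c _) hLip fun x hx =>
      hpt x (closedBall_subset_ball (half_lt_self hr) hx)
  obtain ⟨hdiff, hderiv⟩ := (hunif.mono ball_subset_closedBall).differentiableAt_and_tendsto_fderiv
    (half_pos hr) (hfc.mono fun i hi => hi.1.mono (ball_subset_ball (half_le_self hr.le)))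
  exact ⟨hdiff, hpt c (mem_ball_self hr), hderiv⟩

end Holomorphic

section Euclidean

variable {n : ℕ} {Y Z : Set (EuclideanSpace ℂ (Fin n))} {p : EuclideanSpace ℂ (Fin n)}

theorem caraBall_nonneg : 0 ≤ caraBall n Y p :=
  Real.sSup_nonneg fun _ ⟨_, _, _, _, hx⟩ => hx ▸ by positivity

theorem kobBall_nonneg : 0 ≤ kobBall n Y p :=
  Real.sInf_nonneg fun _ ⟨_, _, _, _, _, hx⟩ => hx ▸ by positivity

theorem norm_det_fderiv_sq_le_caraBall (hY : IsOpen Y) (hp : p ∈ Y)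
    {f : EuclideanSpace ℂ (Fin n) → EuclideanSpace ℂ (Fin n)} (hfd : DifferentiableOn ℂ f Y)
    (hfm : MapsTo f Y (ball 0 1)) (hf0 : f p = 0) :
    ‖(fderiv ℂ f p).det‖ ^ 2 ≤ caraBall n Y p := by
  obtain ⟨δ, hδ, hball⟩ := Metric.isOpen_iff.1 hY p hp
  obtain ⟨C, hC0, hC⟩ := ContinuousLinearMap.exists_norm_det_le ℂ (EuclideanSpace ℂ (Fin n))
  refine le_csSup ⟨(C * (1 / δ) ^ n) ^ 2, ?_⟩ ⟨f, hfd, hfm, hf0, rfl⟩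
  rintro _ ⟨g, hgd, hgm, hg0, rfl⟩
  have hmaps : MapsTo g (ball p δ) (closedBall (g p) 1) := by
    rw [hg0]
    exact (hgm.mono_left hball).mono_right ball_subset_closedBall
  have hnorm := Complex.norm_fderiv_le_div_of_mapsTo_ball (hgd.mono hball) hmaps hδ
  have hdet := hC (fderiv ℂ g p)
  rw [finrank_euclideanSpace_fin] at hdet
  gcongr
  exact hdet.trans (by gcongr)

theorem caraBall_le {c : ℝ}
    (h : ∀ f : EuclideanSpace ℂ (Fin n) → EuclideanSpace ℂ (Fin n), DifferentiableOn ℂ f Y →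
      MapsTo f Y (ball 0 1) → f p = 0 → ‖(fderiv ℂ f p).det‖ ^ 2 ≤ c) :
    caraBall n Y p ≤ c :=
  csSup_le ⟨_, 0, differentiableOn_const 0, fun _ _ => mem_ball_self one_pos, rfl, rfl⟩
    fun _ ⟨f, hfd, hfm, hf0, hx⟩ => hx ▸ h f hfd hfm hf0

theorem exists_lt_norm_det_fderiv_sq_of_lt_caraBall {c : ℝ} (hc : c < caraBall n Y p) :
    ∃ f : EuclideanSpace ℂ (Fin n) → EuclideanSpace ℂ (Fin n), DifferentiableOn ℂ f Y ∧
      MapsTo f Y (ball 0 1) ∧ f p = 0 ∧ c < ‖(fderiv ℂ f p).det‖ ^ 2 := by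
  obtain ⟨_, ⟨f, hfd, hfm, hf0, rfl⟩, hlt⟩ := exists_lt_of_lt_csSup
    (by exact ⟨_, 0, differentiableOn_const 0, fun _ _ => mem_ball_self one_pos, rfl, rfl⟩) hc
  exact ⟨f, hfd, hfm, hf0, hlt⟩

theorem kobBall_le {g : EuclideanSpace ℂ (Fin n) → EuclideanSpace ℂ (Fin n)}
    (hgd : DifferentiableOn ℂ g (ball 0 1)) (hgm : MapsTo g (ball 0 1) Y) (hg0 : g 0 = p)
    (hdet : (fderiv ℂ g 0).det ≠ 0) : kobBall n Y p ≤ (‖(fderiv ℂ g 0).det‖ ^ 2)⁻¹ :=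
  csInf_le ⟨0, fun _ ⟨_, _, _, _, _, hx⟩ => hx ▸ by positivity⟩ ⟨g, hgd, hgm, hg0, hdet, rfl⟩

theorem exists_kobBall_competitor (hY : IsOpen Y) (hp : p ∈ Y) :
    ∃ g : EuclideanSpace ℂ (Fin n) → EuclideanSpace ℂ (Fin n),
      DifferentiableOn ℂ g (ball 0 1) ∧ MapsTo g (ball 0 1) Y ∧ g 0 = p ∧
      (fderiv ℂ g 0).det ≠ 0 := by
  obtain ⟨δ, hδ, hball⟩ := Metric.isOpen_iff.1 hY p hp
  have hderiv : HasFDerivAt (fun z => p + (δ : ℂ) • z) ((δ : ℂ) • ContinuousLinearMap.id ℂ _)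
      (0 : EuclideanSpace ℂ (Fin n)) :=
    ((hasFDerivAt_id 0).const_smul (δ : ℂ)).const_add p
  refine ⟨fun z => p + (δ : ℂ) • z, by fun_prop, fun z hz => hball ?_, by simp, ?_⟩
  · rw [mem_ball_zero_iff] at hz
    rw [mem_ball, dist_eq_norm, add_sub_cancel_left, norm_smul, Complex.norm_real,
      Real.norm_of_nonneg hδ.le]
    exact mul_lt_of_lt_one_right hδ hz
  · rw [hderiv.fderiv, ContinuousLinearMap.det, ContinuousLinearMap.toLinearMap_smul,
      LinearMap.det_smul, ContinuousLinearMap.coe_id, LinearMap.det_id, mul_one]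
    exact pow_ne_zero _ (Complex.ofReal_ne_zero.2 hδ.ne')

theorem le_kobBall (hY : IsOpen Y) (hp : p ∈ Y) {c : ℝ}
    (h : ∀ g : EuclideanSpace ℂ (Fin n) → EuclideanSpace ℂ (Fin n),
      DifferentiableOn ℂ g (ball 0 1) → MapsTo g (ball 0 1) Y → g 0 = p →
      (fderiv ℂ g 0).det ≠ 0 → c ≤ (‖(fderiv ℂ g 0).det‖ ^ 2)⁻¹) :
    c ≤ kobBall n Y p := by
  obtain ⟨g, hgd, hgm, hg0, hdet⟩ := exists_kobBall_competitor hY hp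
  exact le_csInf ⟨_, g, hgd, hgm, hg0, hdet, rfl⟩
    fun _ ⟨g, hgd, hgm, hg0, hdet, hx⟩ => hx ▸ h g hgd hgm hg0 hdet

theorem caraBall_le_kobBall (hY : IsOpen Y) (hp : p ∈ Y) : caraBall n Y p ≤ kobBall n Y p := by
  refine le_kobBall hY hp fun g hgd hgm hg0 hdet => caraBall_le fun f hfd hfm hf0 => ?_
  have hg : DifferentiableAt ℂ g 0 := hgd.differentiableAt (ball_mem_nhds 0 one_pos)
  have hf : DifferentiableAt ℂ f (g 0) := hfd.differentiableAt (hY.mem_nhds (hg0 ▸ hp))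
  have hschwarz := norm_det_fderiv_le_one_of_mapsTo_ball one_pos (hfd.comp hgd hgm)
    (hfm.comp hgm) (by simp [hg0, hf0])
  rw [det_fderiv_comp hf hg, norm_mul, hg0] at hschwarz
  rw [← one_div, le_div_iff₀ (by positivity), ← mul_pow]
  exact pow_le_one₀ (by positivity) hschwarz

theorem norm_det_fderiv_sq_mul_caraBall_le (hY : IsOpen Y) (hZ : IsOpen Z) (hp : p ∈ Y)
    {ψ : EuclideanSpace ℂ (Fin n) → EuclideanSpace ℂ (Fin n)} (hψd : DifferentiableOn ℂ ψ Y)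
    (hψm : MapsTo ψ Y Z) :
    ‖(fderiv ℂ ψ p).det‖ ^ 2 * caraBall n Z (ψ p) ≤ caraBall n Y p := by
  rcases eq_or_ne (fderiv ℂ ψ p).det 0 with h0 | h0
  · simpa [h0] using caraBall_nonneg
  rw [← le_div_iff₀' (by positivity)]
  refine caraBall_le fun f hfd hfm hf0 => ?_
  have hcomp := norm_det_fderiv_sq_le_caraBall hY hp (hfd.comp hψd hψm) (hfm.comp hψm) hf0
  rw [det_fderiv_comp (hfd.differentiableAt (hZ.mem_nhds (hψm hp)))
    (hψd.differentiableAt (hY.mem_nhds hp)), norm_mul, mul_pow] at hcomp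
  rw [le_div_iff₀' (by positivity)]
  linarith

theorem norm_det_fderiv_sq_mul_kobBall_le (hZ : IsOpen Z) {q : EuclideanSpace ℂ (Fin n)}
    (hq : q ∈ Z) {φ : EuclideanSpace ℂ (Fin n) → EuclideanSpace ℂ (Fin n)}
    (hφd : DifferentiableOn ℂ φ Z) (hφm : MapsTo φ Z Y) :
    ‖(fderiv ℂ φ q).det‖ ^ 2 * kobBall n Y (φ q) ≤ kobBall n Z q := by
  rcases eq_or_ne (fderiv ℂ φ q).det 0 with h0 | h0
  · simpa [h0] using kobBall_nonneg
  refine le_kobBall hZ hq fun g hgd hgm hg0 hdet => ?_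
  have hφ : DifferentiableAt ℂ φ (g 0) := hφd.differentiableAt (hZ.mem_nhds (hg0 ▸ hq))
  have hdet_comp := det_fderiv_comp hφ (hgd.differentiableAt (ball_mem_nhds 0 one_pos))
  rw [hg0] at hdet_comp
  have hK := kobBall_le (hφd.comp hgd hgm) (hφm.comp hgm) (show (φ ∘ g) 0 = φ q by simp [hg0])
    (hdet_comp ▸ mul_ne_zero h0 hdet)
  rw [hdet_comp, norm_mul, mul_pow, mul_inv] at hK
  calc ‖(fderiv ℂ φ q).det‖ ^ 2 * kobBall n Y (φ q)
      ≤ ‖(fderiv ℂ φ q).det‖ ^ 2 * ((‖(fderiv ℂ φ q).det‖ ^ 2)⁻¹ *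
        (‖(fderiv ℂ g 0).det‖ ^ 2)⁻¹) := by gcongr
    _ = (‖(fderiv ℂ g 0).det‖ ^ 2)⁻¹ := by field_simp

theorem caraBall_div_kobBall_mul_kobBall_le_caraBall {Ω M : Set (EuclideanSpace ℂ (Fin n))}
    (hY : IsOpen Y) (hΩ : IsOpen Ω) (hp : p ∈ Y)
    {ψ φ : EuclideanSpace ℂ (Fin n) → EuclideanSpace ℂ (Fin n)}
    (hψd : DifferentiableOn ℂ ψ Y) (hψm : MapsTo ψ Y Ω) (hφd : DifferentiableOn ℂ φ Ω)
    (hφm : MapsTo φ Ω M) (hinv : LeftInvOn φ ψ Y) :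
    caraBall n Ω (ψ p) / kobBall n Ω (ψ p) * kobBall n M p ≤ caraBall n Y p := by
  rcases kobBall_nonneg.eq_or_lt with hK0 | hK0
  · rw [← hK0, div_zero, zero_mul]
    exact caraBall_nonneg
  have hq : ψ p ∈ Ω := hψm hp
  have hdet := det_fderiv_mul_det_fderiv_of_leftInvOn (hY.mem_nhds hp)
    (hφd.differentiableAt (hΩ.mem_nhds hq)) (hψd.differentiableAt (hY.mem_nhds hp)) hinv
  have hC := norm_det_fderiv_sq_mul_caraBall_le hY hΩ hp hψd hψm
  have hK := norm_det_fderiv_sq_mul_kobBall_le hΩ hq hφd hφm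
  rw [hinv hp] at hK
  have hab : ‖(fderiv ℂ ψ p).det‖ ^ 2 * ‖(fderiv ℂ φ (ψ p)).det‖ ^ 2 = 1 := by
    rw [← mul_pow, ← norm_mul, mul_comm, hdet, norm_one, one_pow]
  calc caraBall n Ω (ψ p) / kobBall n Ω (ψ p) * kobBall n M p
      = caraBall n Ω (ψ p) / kobBall n Ω (ψ p) * (‖(fderiv ℂ ψ p).det‖ ^ 2 *
        (‖(fderiv ℂ φ (ψ p)).det‖ ^ 2 * kobBall n M p)) := by
        rw [← mul_assoc (‖(fderiv ℂ ψ p).det‖ ^ 2), hab, one_mul]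
    _ ≤ caraBall n Ω (ψ p) / kobBall n Ω (ψ p) *
        (‖(fderiv ℂ ψ p).det‖ ^ 2 * kobBall n Ω (ψ p)) := by
        have := caraBall_nonneg (n := n) (Y := Ω) (p := ψ p)
        gcongr
    _ = ‖(fderiv ℂ ψ p).det‖ ^ 2 * caraBall n Ω (ψ p) := by field_simp
    _ ≤ caraBall n Y p := hC

theorem norm_det_fderiv_sq_le_caraBall_of_mapsTo_closedBall (hY : IsOpen Y) (hp : p ∈ Y)
    {f : EuclideanSpace ℂ (Fin n) → EuclideanSpace ℂ (Fin n)} (hfd : DifferentiableOn ℂ f Y)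
    (hfm : MapsTo f Y (closedBall 0 1)) (hf0 : f p = 0) :
    ‖(fderiv ℂ f p).det‖ ^ 2 ≤ caraBall n Y p := by
  have hscaled : ∀ t ∈ Ioo (0 : ℝ) 1,
      t ^ (2 * n) * ‖(fderiv ℂ f p).det‖ ^ 2 ≤ caraBall n Y p := fun t ht => by
    have hmaps : MapsTo (fun x => (t : ℂ) • f x) Y (ball 0 1) := fun x hx => by
      rw [mem_ball_zero_iff, norm_smul, Complex.norm_real, Real.norm_of_nonneg ht.1.le]
      exact (mul_le_of_le_one_right ht.1.le (mem_closedBall_zero_iff.1 (hfm hx))).trans_lt ht.2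
    have h := norm_det_fderiv_sq_le_caraBall hY hp (hfd.const_smul (t : ℂ)) hmaps
      (by simp [hf0])
    rwa [fderiv_const_smul (hfd.differentiableAt (hY.mem_nhds hp)), ContinuousLinearMap.det,
      ContinuousLinearMap.toLinearMap_smul, LinearMap.det_smul, finrank_euclideanSpace_fin,
      norm_mul, norm_pow, Complex.norm_real, Real.norm_of_nonneg ht.1.le, mul_pow, ← pow_mul,
      mul_comm n 2] at h
  have hlim : Tendsto (fun t : ℝ => t ^ (2 * n) * ‖(fderiv ℂ f p).det‖ ^ 2) (𝓝[<] 1)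
      (𝓝 (‖(fderiv ℂ f p).det‖ ^ 2)) := by
    have hcont : Continuous fun t : ℝ => t ^ (2 * n) * ‖(fderiv ℂ f p).det‖ ^ 2 := by fun_prop
    simpa using (hcont.tendsto 1).mono_left nhdsWithin_le_nhds
  exact le_of_tendsto hlim (eventually_of_mem (Ioo_mem_nhdsLT one_pos) hscaled)

theorem le_caraBall_iUnion_of_tendsto {Ms : ℕ → Set (EuclideanSpace ℂ (Fin n))}
    (hmono : Monotone Ms) (hopen : ∀ j, IsOpen (Ms j)) (hp : p ∈ ⋃ j, Ms j) {a : ℕ → ℝ}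
    {A : ℝ} (ha : Tendsto a atTop (𝓝 A)) (hle : ∀ j, a j ≤ caraBall n (Ms j) p) :
    A ≤ caraBall n (⋃ j, Ms j) p := by
  have hlt : ∀ j : ℕ, a j - 1 / (j + 1) < caraBall n (Ms j) p := fun j => by
    linarith [hle j, Nat.one_div_pos_of_nat (α := ℝ) (n := j)]
  choose F hFd hFm hF0 hFlt using fun j => exists_lt_norm_det_fderiv_sq_of_lt_caraBall (hlt j)
  -- an ultrafilter finer than `atTop` replaces the passage to a subsequence
  set 𝒰 := Ultrafilter.of (atTop : Filter ℕ)
  have h𝒰 : (𝒰 : Filter ℕ) ≤ atTop := Ultrafilter.of_le _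
  have hlocal : ∀ c ∈ ⋃ j, Ms j, ∃ r > 0, ∀ᶠ k in (𝒰 : Filter ℕ),
      DifferentiableOn ℂ (F k) (ball c r) ∧ MapsTo (F k) (ball c r) (closedBall 0 1) := by
    intro c hc
    obtain ⟨j, hj⟩ := mem_iUnion.1 hc
    obtain ⟨r, hr, hball⟩ := Metric.isOpen_iff.1 (hopen j) c hj
    refine ⟨r, hr, h𝒰 ((eventually_ge_atTop j).mono fun k hk => ?_)⟩
    have hsub := hball.trans (hmono hk)
    exact ⟨(hFd k).mono hsub, ((hFm k).mono_left hsub).mono_right ball_subset_closedBall⟩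
  obtain ⟨f, hf⟩ := 𝒰.exists_tendsto_fderiv_of_eventually_mapsTo_closedBall hlocal
  obtain ⟨-, hfp, hdfp⟩ := hf p hp
  have hfm : MapsTo f (⋃ j, Ms j) (closedBall 0 1) := fun x hx => by
    obtain ⟨-, hfx, -⟩ := hf x hx
    obtain ⟨r, hr, hloc⟩ := hlocal x hx
    exact isClosed_closedBall.mem_of_tendsto hfx (hloc.mono fun k hk => hk.2 (mem_ball_self hr))
  have hf0 : f p = 0 := tendsto_nhds_unique hfp (by simp [hF0])
  have hdet : Tendsto (fun k => ‖(fderiv ℂ (F k) p).det‖ ^ 2) 𝒰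
      (𝓝 (‖(fderiv ℂ f p).det‖ ^ 2)) :=
    ((ContinuousLinearMap.continuous_det.tendsto _).comp hdfp).norm.pow 2
  have ha' : Tendsto (fun j : ℕ => a j - 1 / (j + 1)) 𝒰 (𝓝 A) := by
    simpa using (ha.sub tendsto_one_div_add_atTop_nhds_zero_nat).mono_left h𝒰
  exact (le_of_tendsto_of_tendsto' ha' hdet fun k => (hFlt k).le).trans
    (norm_det_fderiv_sq_le_caraBall_of_mapsTo_closedBall (isOpen_iUnion hopen) hp
      (fun x hx => (hf x hx).1.differentiableWithinAt) hfm hf0)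

end Euclidean

theorem stmt_16_general (n : ℕ)
    (Ms : ℕ → Set (EuclideanSpace ℂ (Fin n)))
    (hmono : Monotone Ms) (hopen : ∀ j, IsOpen (Ms j))
    (M : Set (EuclideanSpace ℂ (Fin n))) (hM : M = ⋃ j, Ms j)
    (Ω : Set (EuclideanSpace ℂ (Fin n)))
    (hΩo : IsOpen Ω)
    (ψ φ : ℕ → EuclideanSpace ℂ (Fin n) → EuclideanSpace ℂ (Fin n))
    (hψd : ∀ j, DifferentiableOn ℂ (ψ j) (Ms j))
    (hψm : ∀ j, MapsTo (ψ j) (Ms j) Ω)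
    (hφd : ∀ j, DifferentiableOn ℂ (φ j) Ω)
    (hφm : ∀ j, MapsTo (φ j) Ω (Ms j))
    (hlr : ∀ j, ∀ z ∈ Ms j, φ j (ψ j z) = z)
    (z0 : EuclideanSpace ℂ (Fin n)) (hz0 : z0 ∈ Ms 0)
    (hck : Tendsto (fun j => caraBall n Ω (ψ j z0) / kobBall n Ω (ψ j z0))
      atTop (nhds 1)) :
    caraBall n M z0 = kobBall n M z0 := by
  subst hM
  have hz0M : z0 ∈ ⋃ j, Ms j := mem_iUnion.2 ⟨0, hz0⟩
  refine le_antisymm (caraBall_le_kobBall (isOpen_iUnion hopen) hz0M) ?_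
  refine le_caraBall_iUnion_of_tendsto hmono hopen hz0M
    (by simpa using hck.mul_const (kobBall n (⋃ j, Ms j) z0)) fun j => ?_
  exact caraBall_div_kobBall_mul_kobBall_le_caraBall (hopen j) hΩo (hmono j.zero_le hz0)
    (hψd j) (hψm j) (hφd j) ((hφm j).mono_right (subset_iUnion Ms j)) (hlr j)

theorem stmt_16 (n : ℕ)
    (Ms : ℕ → Set (EuclideanSpace ℂ (Fin n)))
    (hmono : Monotone Ms) (hopen : ∀ j, IsOpen (Ms j))
    (M : Set (EuclideanSpace ℂ (Fin n))) (hM : M = ⋃ j, Ms j)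
    (hconn : IsConnected M)
    (Ω : Set (EuclideanSpace ℂ (Fin n)))
    (hΩo : IsOpen Ω) (hΩb : Bornology.IsBounded Ω)
    (ψ φ : ℕ → EuclideanSpace ℂ (Fin n) → EuclideanSpace ℂ (Fin n))
    (hψd : ∀ j, DifferentiableOn ℂ (ψ j) (Ms j))
    (hψm : ∀ j, MapsTo (ψ j) (Ms j) Ω)
    (hφd : ∀ j, DifferentiableOn ℂ (φ j) Ω)
    (hφm : ∀ j, MapsTo (φ j) Ω (Ms j))
    (hlr : ∀ j, ∀ z ∈ Ms j, φ j (ψ j z) = z)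
    (hrl : ∀ j, ∀ w ∈ Ω, ψ j (φ j w) = w)
    (z0 : EuclideanSpace ℂ (Fin n)) (hz0 : z0 ∈ Ms 0)
    (hck : Tendsto (fun j => caraBall n Ω (ψ j z0) / kobBall n Ω (ψ j z0))
      atTop (nhds 1))
    (hKpos : 0 < kobBall n M z0) :
    caraBall n M z0 = kobBall n M z0 :=
  stmt_16_general n Ms hmono hopen M hM Ω hΩo ψ φ hψd hψm hφd hφm hlr z0 hz0 hck
end
end

section
/- Let Mⱼ be an increasing sequence of open subsets of ℂⁿ whose union M = ∪ⱼ Mⱼ is connected, and let Ωⱼ ⊆ ℂⁿ and Ω∞ ⊆ ℂⁿ be open sets such that every compact subset of Ω∞ is contained in Ωⱼ for all sufficiently large j. Let ψʲ : Mⱼ → Ωⱼ be biholomorphisms with inverses φʲ : Ωⱼ → Mⱼ. Suppose that: (a) ψʲ converges uniformly on compact subsets of M to a map ψ : M → Ω∞ which is injective and holomorphic; and (b) φʲ converges uniformly on compact subsets of Ω∞ to a map φ : Ω∞ → ℂⁿ with φ(Ω∞) ⊆ M. Then ψ ∘ φ is the identity on Ω∞ and φ ∘ ψ is the identity on M; in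 particular ψ is a biholomorphism of M onto Ω∞. -/
/-!
Fix `w ∈ Ω∞`. Eventually `w ∈ Ωⱼ`, so `ψʲ (φʲ w) = w`, while `φʲ w → φ w ∈ M`. Since `ψʲ → ψ`
locally uniformly on the open set `M` and `ψ` is continuous there, `ψʲ (φʲ w) → ψ (φ w)`; hence
`ψ (φ w) = w`. The same argument with the roles exchanged gives `φ (ψ z) = z` on `M`, once one
knows that `φ` is continuous on `Ω∞`: near each point it is a uniform limit of the `φʲ`, which are
holomorphic, hence continuous, on a fixed compact neighbourhood for all large `j`.
-/

open Set Filter Topology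

section LimitOfInverses

variable {ι X Y : Type*} {p : Filter ι}

theorem continuousOn_of_tendstoUniformlyOn_isCompact [TopologicalSpace X] [LocallyCompactSpace X]
    [UniformSpace Y] [p.NeBot] {F : ι → X → Y} {f : X → Y} {U : Set X} (hU : IsOpen U)
    (hF : ∀ K ⊆ U, IsCompact K → TendstoUniformlyOn F f p K)
    (hFc : ∀ K ⊆ U, IsCompact K → ∀ᶠ i in p, ContinuousOn (F i) K) :
    ContinuousOn f U := by
  intro x hx
  obtain ⟨K, hKx, hKU, hK⟩ := local_compact_nhds (hU.mem_nhds hx)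
  exact (((hF K hKU hK).continuousOn (hFc K hKU hK).frequently).continuousAt hKx).continuousWithinAt

theorem leftInvOn_of_tendstoLocallyUniformlyOn [UniformSpace X] [T2Space X] [TopologicalSpace Y]
    [p.NeBot] {F : ι → X → Y} {f : X → Y} {G : ι → Y → X} {g : Y → X} {U : Set X} {V : Set Y}
    (hG : TendstoLocallyUniformlyOn G g p V) (hg : ContinuousOn g V) (hV : IsOpen V)
    (hF : ∀ x ∈ U, Tendsto (fun i => F i x) p (𝓝 (f x))) (hfUV : MapsTo f U V)
    (hinv : ∀ x ∈ U, ∀ᶠ i in p, G i (F i x) = x) :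
    LeftInvOn g f U := by
  intro x hx
  have hFV : Tendsto (fun i => F i x) p (𝓝[V] f x) :=
    tendsto_nhdsWithin_iff.2 ⟨hF x hx, hF x hx (hV.mem_nhds (hfUV hx))⟩
  have hlim : Tendsto (fun i => G i (F i x)) p (𝓝 (g (f x))) :=
    hG.tendsto_comp (hg _ (hfUV hx)) (hfUV hx) hFV
  exact tendsto_nhds_unique (hlim.congr' (hinv x hx)) tendsto_const_nhds

end LimitOfInverses

theorem stmt_17_general (n : ℕ)
    (Ms : ℕ → Set (EuclideanSpace ℂ (Fin n)))
    (hmono : Monotone Ms) (hopen : ∀ j, IsOpen (Ms j))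
    (M : Set (EuclideanSpace ℂ (Fin n))) (hM : M = ⋃ j, Ms j)
    (Ωs : ℕ → Set (EuclideanSpace ℂ (Fin n)))
    (Ωinf : Set (EuclideanSpace ℂ (Fin n)))
    (hΩio : IsOpen Ωinf)
    (hcpt : ∀ K ⊆ Ωinf, IsCompact K → ∃ j0, ∀ j ≥ j0, K ⊆ Ωs j)
    (ψ φ : ℕ → EuclideanSpace ℂ (Fin n) → EuclideanSpace ℂ (Fin n))
    (hφd : ∀ j, DifferentiableOn ℂ (φ j) (Ωs j))
    (hinv : ∀ j, ∀ z ∈ Ms j, φ j (ψ j z) = z)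
    (hinv' : ∀ j, ∀ w ∈ Ωs j, ψ j (φ j w) = w)
    (ψl : EuclideanSpace ℂ (Fin n) → EuclideanSpace ℂ (Fin n))
    (hψl : ∀ K ⊆ M, IsCompact K → TendstoUniformlyOn ψ ψl atTop K)
    (hψhol : DifferentiableOn ℂ ψl M)
    (hψmaps : MapsTo ψl M Ωinf)
    (φl : EuclideanSpace ℂ (Fin n) → EuclideanSpace ℂ (Fin n))
    (hφl : ∀ K ⊆ Ωinf, IsCompact K → TendstoUniformlyOn φ φl atTop K)
    (hφmaps : MapsTo φl Ωinf M) :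
    (∀ w ∈ Ωinf, ψl (φl w) = w) ∧
    (∀ z ∈ M, φl (ψl z) = z) ∧
    BijOn ψl M Ωinf := by
  have hMo : IsOpen M := hM ▸ isOpen_iUnion hopen
  have hψloc := (tendstoLocallyUniformlyOn_iff_forall_isCompact hMo).2 hψl
  have hφloc := (tendstoLocallyUniformlyOn_iff_forall_isCompact hΩio).2 hφl
  have hΩs : ∀ K ⊆ Ωinf, IsCompact K → ∀ᶠ j in atTop, K ⊆ Ωs j := fun K hKΩ hK =>
    eventually_atTop.2 (hcpt K hKΩ hK)
  have hφc : ContinuousOn φl Ωinf :=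
    continuousOn_of_tendstoUniformlyOn_isCompact hΩio hφl fun K hKΩ hK =>
      (hΩs K hKΩ hK).mono fun j hj => (hφd j).continuousOn.mono hj
  have h1 : LeftInvOn ψl φl Ωinf :=
    leftInvOn_of_tendstoLocallyUniformlyOn hψloc hψhol.continuousOn hMo
      (fun _ hw => hφloc.tendsto_at hw) hφmaps fun w hw =>
        (hΩs {w} (singleton_subset_iff.2 hw) isCompact_singleton).mono fun j hj =>
          hinv' j w (hj rfl)
  have h2 : LeftInvOn φl ψl M :=
    leftInvOn_of_tendstoLocallyUniformlyOn hφloc hφc hΩio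
      (fun _ hz => hψloc.tendsto_at hz) hψmaps fun z hz => by
        obtain ⟨j1, hj1⟩ := mem_iUnion.1 (hM ▸ hz)
        exact eventually_atTop.2 ⟨j1, fun j hj => hinv j z (hmono hj hj1)⟩
  exact ⟨h1, h2, InvOn.bijOn ⟨h2, h1⟩ hψmaps hφmaps⟩

theorem stmt_17 (n : ℕ)
    (Ms : ℕ → Set (EuclideanSpace ℂ (Fin n)))
    (hmono : Monotone Ms) (hopen : ∀ j, IsOpen (Ms j))
    (M : Set (EuclideanSpace ℂ (Fin n))) (hM : M = ⋃ j, Ms j)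
    (hconn : IsConnected M)
    (Ωs : ℕ → Set (EuclideanSpace ℂ (Fin n)))
    (Ωinf : Set (EuclideanSpace ℂ (Fin n)))
    (hΩo : ∀ j, IsOpen (Ωs j)) (hΩio : IsOpen Ωinf)
    (hcpt : ∀ K ⊆ Ωinf, IsCompact K → ∃ j0, ∀ j ≥ j0, K ⊆ Ωs j)
    (ψ φ : ℕ → EuclideanSpace ℂ (Fin n) → EuclideanSpace ℂ (Fin n))
    (hψd : ∀ j, DifferentiableOn ℂ (ψ j) (Ms j))
    (hbij : ∀ j, BijOn (ψ j) (Ms j) (Ωs j))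
    (hφd : ∀ j, DifferentiableOn ℂ (φ j) (Ωs j))
    (hinv : ∀ j, ∀ z ∈ Ms j, φ j (ψ j z) = z)
    (hinv' : ∀ j, ∀ w ∈ Ωs j, ψ j (φ j w) = w)
    (ψl : EuclideanSpace ℂ (Fin n) → EuclideanSpace ℂ (Fin n))
    (hψl : ∀ K ⊆ M, IsCompact K → TendstoUniformlyOn ψ ψl atTop K)
    (hψinj : InjOn ψl M) (hψhol : DifferentiableOn ℂ ψl M)
    (hψmaps : MapsTo ψl M Ωinf)
    (φl : EuclideanSpace ℂ (Fin n) → EuclideanSpace ℂ (Fin n))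
    (hφl : ∀ K ⊆ Ωinf, IsCompact K → TendstoUniformlyOn φ φl atTop K)
    (hφmaps : MapsTo φl Ωinf M) :
    (∀ w ∈ Ωinf, ψl (φl w) = w) ∧
    (∀ z ∈ M, φl (ψl z) = z) ∧
    BijOn ψl M Ωinf :=
  stmt_17_general n Ms hmono hopen M hM Ωs Ωinf hΩio hcpt ψ φ hφd hinv hinv' ψl hψl hψhol hψmaps φl
    hφl hφmaps
end
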